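/- arXiv:2001.07106 — 2 statements merged into one kernel-verified Lean document; each statement's English description precedes it below -/
import Mathlib

section
/- Let G be a simple graph on Fin n, let j be a vertex with neighborhood N_j, and let α ∈ ℝ. Then exp(iα X_j)|G⟩ = exp(iα Z_{N_j})|G⟩, where X_j denotes the local operator acting as X on qubit j and as the identity elsewhere, and Z_{N_j} denotes the local operator acting as Z on every qubit in N_j and as the identity elsewhere (the exponentials are matrix exponentials of 2^n × 2^n matrices). -/
open Matrix
open scoped Classical

noncomputable section

/-- The state space of `n` qubits. -/
abbrev QState (n : ℕ) := (Fin n → Fin 2) → ℂ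

/-- Single-qubit operators. -/
abbrev Mat2 := Matrix (Fin 2) (Fin 2) ℂ

/-- Operators on `n` qubits. -/
abbrev MatQ (n : ℕ) := Matrix (Fin n → Fin 2) (Fin n → Fin 2) ℂ

/-- Pauli X. -/
def PX : Mat2 := !![0, 1; 1, 0]

/-- Pauli Y. -/
def PY : Mat2 := !![0, -Complex.I; Complex.I, 0]

/-- Pauli Z. -/
def PZ : Mat2 := !![1, 0; 0, -1]

/-- The Kronecker (tensor) product `A₁ ⊗ ⋯ ⊗ A_n` of single-qubit operators. -/
def localOp {n : ℕ} (A : Fin n → Mat2) : MatQ n := fun x y => ∏ j, A j (x j) (y j)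

/-- The single-qubit Pauli group `P₁ = ⟨X, Y, Z⟩`. -/
def P1 : Submonoid Mat2 := Submonoid.closure {PX, PY, PZ}

/-- The `n`-qubit Pauli group: generated by `n`-fold tensor products of `1, X, Y, Z`. -/
def PN (n : ℕ) : Submonoid (MatQ n) :=
  Submonoid.closure
    { M | ∃ A : Fin n → Mat2, (∀ j, A j = 1 ∨ A j = PX ∨ A j = PY ∨ A j = PZ) ∧ M = localOp A }

/-- Membership in the single-qubit Clifford group `C₁`. -/
def IsClifford1 (U : Mat2) : Prop :=
  U ∈ Matrix.unitaryGroup (Fin 2) ℂ ∧ ∀ σ ∈ P1, U * σ * Uᴴ ∈ P1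

/-- `C₁³`: single-qubit Clifford operators of order `3`. -/
def IsC13 (U : Mat2) : Prop := IsClifford1 U ∧ U ^ 3 = 1 ∧ U ≠ 1

/-- The matrix exponential `e^{iασ}`. -/
def uexp (α : ℝ) (σ : Mat2) : Mat2 := NormedSpace.exp ((Complex.I * (α : ℂ)) • σ)

/-- `A` is proportional to `B` (by a nonzero scalar). -/
def PropTo {α : Type*} [SMul ℂ α] (A B : α) : Prop := ∃ c : ℂ, c ≠ 0 ∧ A = c • B

/-- The graph state of a simple graph on `Fin n`:
`|G⟩(x) = 2^{-n/2} (-1)^{#{edges both of whose endpoints i satisfy x i = 1}}`. -/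
def graphState {n : ℕ} (G : SimpleGraph (Fin n)) : QState n := fun x =>
  (((Real.sqrt 2)⁻¹ ^ n : ℝ) : ℂ) *
    (-1 : ℂ) ^ (Finset.univ.filter fun e : Sym2 (Fin n) =>
        e ∈ G.edgeSet ∧ ∀ i ∈ e, x i = 1).card

/-- The `k`-th tensor factor of the canonical stabilizer generator `S_(j)` of a graph state:
`X` on qubit `j`, `Z` on the neighbours of `j`, identity elsewhere. -/
def canonGenFactor {n : ℕ} (G : SimpleGraph (Fin n)) (j k : Fin n) : Mat2 :=
  if k = j then PX else if G.Adj j k then PZ else 1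

/-- The canonical stabilizer generator `S_(j)` of a graph state. -/
def canonGen {n : ℕ} (G : SimpleGraph (Fin n)) (j : Fin n) : MatQ n :=
  localOp (canonGenFactor G j)

/-- The stabilizer group `S_G` of a graph state. -/
def stabGroup {n : ℕ} (G : SimpleGraph (Fin n)) : Submonoid (MatQ n) :=
  Submonoid.closure (Set.range (canonGen G))

/-- An `n`-qubit operator is a local unitary if it is a tensor product of `2×2` unitaries. -/
def IsLocalUnitary {n : ℕ} (U : MatQ n) : Prop :=
  ∃ A : Fin n → Mat2, (∀ j, A j ∈ Matrix.unitaryGroup (Fin 2) ℂ) ∧ U = localOp A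

/-- The local unitary symmetry group `U_G` of the graph state of `G`. -/
def symUG {n : ℕ} (G : SimpleGraph (Fin n)) : Set (MatQ n) :=
  { U | IsLocalUnitary U ∧ ∃ c : ℂ, U.mulVec (graphState G) = c • graphState G }

/-- `|G⟩ ∈ T`: no element of `U_G` has a tensor factor proportional to an element of `C₁³`. -/
def inT {n : ℕ} (G : SimpleGraph (Fin n)) : Prop :=
  ∀ A : Fin n → Mat2, (∀ j, A j ∈ Matrix.unitaryGroup (Fin 2) ℂ) →
    localOp A ∈ symUG G → ∀ j, ¬ ∃ C : Mat2, IsC13 C ∧ PropTo (A j) C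

/-- Local complementation of a graph at a vertex `v`. -/
def localComp {V : Type*} (G : SimpleGraph V) (v : V) : SimpleGraph V where
  Adj a b := a ≠ b ∧ Xor' (G.Adj a b) (G.Adj v a ∧ G.Adj v b)
  symm := by
    constructor
    intro a b h
    obtain ⟨hab, h⟩ := h
    refine ⟨hab.symm, ?_⟩
    have h1 : G.Adj b a = G.Adj a b := propext (G.adj_comm b a)
    have h2 : (G.Adj v b ∧ G.Adj v a) = (G.Adj v a ∧ G.Adj v b) := propext and_comm
    rw [h1, h2]
    exact h
  loopless := by constructor; intro a h; exact h.1 rfl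

/-- A vertex is a leaf up to local complementation if some finite sequence of local
complementations turns the graph into one in which it has exactly one neighbour. -/
def IsLeafUpToLC {n : ℕ} (G : SimpleGraph (Fin n)) (v : Fin n) : Prop :=
  ∃ l : List (Fin n), ∃! w, (l.foldl localComp G).Adj v w

/-- The generating set of leaf symmetries, for leaf-parent pairs, twins and connected twins. -/
def leafSymSet {n : ℕ} (G : SimpleGraph (Fin n)) : Set (MatQ n) :=
  { U | ∃ (α : ℝ) (l p : Fin n),
      (G.neighborSet l = {p} ∧
        U = localOp fun k => if k = l then uexp α PX else if k = p then uexp (-α) PZ else 1) ∨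
      (l ≠ p ∧ G.neighborSet l = G.neighborSet p ∧
        U = localOp fun k => if k = l then uexp α PX else if k = p then uexp (-α) PX else 1) ∨
      (G.Adj l p ∧ G.neighborSet l \ {p} = G.neighborSet p \ {l} ∧
        U = localOp fun k => if k = l then uexp α PY else if k = p then uexp (-α) PY else 1) }

/-- The group `L_G` generated by all leaf symmetries of `G`. -/
def LG {n : ℕ} (G : SimpleGraph (Fin n)) : Submonoid (MatQ n) :=
  Submonoid.closure (leafSymSet G)

/-- An `n`-qubit stabilizer state: a nonzero state `ψ` together with `n` independent, pairwise
commuting elements of the Pauli group generating a subgroup not containing `-1`, all of which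
stabilize `ψ`. -/
structure StabState (n : ℕ) where
  ψ : QState n
  g : Fin n → MatQ n
  ψ_ne : ψ ≠ 0
  g_mem : ∀ j, g j ∈ PN n
  g_comm : ∀ j k, Commute (g j) (g k)
  g_indep : ∀ s : Finset (Fin n),
    s.noncommProd g (fun a _ b _ _ => g_comm a b) = 1 → s = ∅
  neg_one_not : (-1 : MatQ n) ∉ Submonoid.closure (Set.range g)
  stabilizes : ∀ j, (g j).mulVec ψ = ψ

/-- The stabilizer group `S_ψ` of a stabilizer state. -/
def StabState.stab {n : ℕ} (s : StabState n) : Submonoid (MatQ n) :=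
  Submonoid.closure (Set.range s.g)

/-- `ψ` is a product state across the bipartition `(S, Sᶜ)` of the qubits. -/
def ProductAcross {n : ℕ} (ψ : QState n) (S : Set (Fin n)) : Prop :=
  ∃ (φ : (S → Fin 2) → ℂ) (χ : ((Sᶜ : Set (Fin n)) → Fin 2) → ℂ),
    ∀ x, ψ x = φ (fun j => x j.1) * χ (fun j => x j.1)

/-- A state is fully entangled if it is not a product across any nontrivial bipartition. -/
def FullyEntangled {n : ℕ} (ψ : QState n) : Prop :=
  ∀ S : Set (Fin n), S ≠ ∅ → S ≠ Set.univ → ¬ ProductAcross ψ S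

/-- The adjacency matrix of a graph over `𝔽₂`. -/
def adjMat {n : ℕ} (G : SimpleGraph (Fin n)) : Matrix (Fin n) (Fin n) (ZMod 2) :=
  Matrix.of fun i j => if G.Adj i j then 1 else 0


lemma localOp_mul {n : ℕ} (A B : Fin n → Mat2) :
    localOp A * localOp B = localOp fun k => A k * B k := by
  ext x y
  simp only [localOp, Matrix.mul_apply]
  calc ∑ z : Fin n → Fin 2, (∏ k, A k (x k) (z k)) * ∏ k, B k (z k) (y k)
      = ∑ z : Fin n → Fin 2, ∏ k, A k (x k) (z k) * B k (z k) (y k) := by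
        simp_rw [Finset.prod_mul_distrib]
    _ = ∏ k, ∑ c : Fin 2, A k (x k) c * B k c (y k) :=
        (Fintype.prod_sum fun k c => A k (x k) c * B k c (y k)).symm

lemma PX_apply_flip (a : Fin 2) : PX a (a + 1) = 1 := by
  fin_cases a <;> simp [PX]

lemma PX_apply_same (a : Fin 2) : PX a a = 0 := by
  fin_cases a <;> simp [PX]

lemma PZ_apply_same (a : Fin 2) : PZ a a = if a = 1 then -1 else 1 := by
  fin_cases a <;> simp [PZ]

lemma PZ_apply_ne {a b : Fin 2} (h : a ≠ b) : PZ a b = 0 := by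
  fin_cases a <;> fin_cases b <;> simp_all [PZ]

lemma X_mulVec {n : ℕ} (j : Fin n) (ψ : QState n) (x : Fin n → Fin 2) :
    (localOp fun k => if k = j then PX else 1).mulVec ψ x
      = ψ (Function.update x j (x j + 1)) := by
  unfold Matrix.mulVec dotProduct localOp
  rw [Finset.sum_eq_single (Function.update x j (x j + 1))]
  · simp only []
    rw [Finset.prod_eq_one, one_mul]
    intro k _
    by_cases hk : k = j
    · subst hk; simp [PX_apply_flip]
    · rw [if_neg hk, Function.update_of_ne hk, Matrix.one_apply_eq]
  · intro y _ hy
    have : ∃ k, y k ≠ Function.update x j (x j + 1) k := by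
      by_contra h; push_neg at h; exact hy (funext h)
    obtain ⟨k, hk⟩ := this
    apply mul_eq_zero_of_left
    apply Finset.prod_eq_zero (Finset.mem_univ k)
    by_cases hkj : k = j
    · subst hkj
      rw [Function.update_self] at hk
      have hyx : y k = x k := by
        revert hk; generalize y k = a; generalize x k = b; revert a b; decide
      simp [hyx, PX_apply_same]
    · rw [Function.update_of_ne hkj] at hk
      simp [hkj, Matrix.one_apply_ne (Ne.symm hk)]
  · intro h; exact absurd (Finset.mem_univ _) h

lemma Z_mulVec {n : ℕ} (G : SimpleGraph (Fin n)) (j : Fin n) (ψ : QState n)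
    (x : Fin n → Fin 2) :
    (localOp fun k => if G.Adj j k then PZ else 1).mulVec ψ x
      = (∏ k, (if G.Adj j k then PZ else 1 : Mat2) (x k) (x k)) * ψ x := by
  unfold Matrix.mulVec dotProduct localOp
  rw [Finset.sum_eq_single x]
  · intro y _ hy
    have : ∃ k, x k ≠ y k := by
      by_contra h; push_neg at h; exact hy.symm (funext fun k => (h k))
    obtain ⟨k, hk⟩ := this
    apply mul_eq_zero_of_left
    apply Finset.prod_eq_zero (Finset.mem_univ k)
    by_cases hadj : G.Adj j k
    · simp [hadj, PZ_apply_ne hk]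
    · simp [hadj, Matrix.one_apply_ne hk]
  · intro h; exact absurd (Finset.mem_univ _) h

lemma fin2_cases (a : Fin 2) : a = 0 ∨ a = 1 := by fin_cases a <;> simp

lemma cIn_card_of_one {n : ℕ} (G : SimpleGraph (Fin n)) (j : Fin n)
    (x : Fin n → Fin 2) (hx : x j = 1) :
    (Finset.univ.filter fun k => G.Adj j k ∧ x k = 1).card
      = (Finset.univ.filter fun e : Sym2 (Fin n) =>
          (e ∈ G.edgeSet ∧ ∀ i ∈ e, x i = 1) ∧ j ∈ e).card := by
  apply Finset.card_bij (fun k _ => s(j, k))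
  · intro k hk
    simp only [Finset.mem_filter, Finset.mem_univ, true_and] at hk ⊢
    refine ⟨⟨G.mem_edgeSet.2 hk.1, ?_⟩, Sym2.mem_mk_left j k⟩
    intro i hi
    rcases Sym2.mem_iff.1 hi with h | h
    · rw [h]; exact hx
    · rw [h]; exact hk.2
  · intro a ha b hb hab
    exact Sym2.congr_right.mp hab
  · intro e he
    simp only [Finset.mem_filter, Finset.mem_univ, true_and] at he
    obtain ⟨⟨hedge, hall⟩, hje⟩ := he
    refine ⟨Sym2.Mem.other hje, ?_, Sym2.other_spec hje⟩
    simp only [Finset.mem_filter, Finset.mem_univ, true_and]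
    constructor
    · rw [← G.mem_edgeSet, Sym2.other_spec hje]; exact hedge
    · exact hall _ (Sym2.other_mem hje)

lemma cIn_card_of_ne_one {n : ℕ} (G : SimpleGraph (Fin n)) (j : Fin n)
    (x : Fin n → Fin 2) (hx : x j ≠ 1) :
    (Finset.univ.filter fun e : Sym2 (Fin n) =>
        (e ∈ G.edgeSet ∧ ∀ i ∈ e, x i = 1) ∧ j ∈ e) = ∅ := by
  rw [Finset.filter_eq_empty_iff]
  rintro e - ⟨⟨-, hall⟩, hje⟩
  exact hx (hall j hje)

lemma cOut_eq {n : ℕ} (G : SimpleGraph (Fin n)) (j : Fin n) (x : Fin n → Fin 2) :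
    (Finset.univ.filter fun e : Sym2 (Fin n) =>
        (e ∈ G.edgeSet ∧ ∀ i ∈ e, Function.update x j (x j + 1) i = 1) ∧ j ∉ e)
      = (Finset.univ.filter fun e : Sym2 (Fin n) =>
        (e ∈ G.edgeSet ∧ ∀ i ∈ e, x i = 1) ∧ j ∉ e) := by
  apply Finset.filter_congr
  intro e _
  constructor
  · rintro ⟨⟨he, hall⟩, hje⟩
    refine ⟨⟨he, fun i hi => ?_⟩, hje⟩
    have hij : i ≠ j := fun h => hje (h ▸ hi)
    have := hall i hi
    rwa [Function.update_of_ne hij] at this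
  · rintro ⟨⟨he, hall⟩, hje⟩
    refine ⟨⟨he, fun i hi => ?_⟩, hje⟩
    have hij : i ≠ j := fun h => hje (h ▸ hi)
    rw [Function.update_of_ne hij]
    exact hall i hi

lemma m_update {n : ℕ} (G : SimpleGraph (Fin n)) (j : Fin n) (x : Fin n → Fin 2) :
    (Finset.univ.filter fun k => G.Adj j k ∧ Function.update x j (x j + 1) k = 1)
      = (Finset.univ.filter fun k => G.Adj j k ∧ x k = 1) := by
  apply Finset.filter_congr
  intro k _
  by_cases h : G.Adj j k
  · have hkj : k ≠ j := fun e => G.irrefl (e ▸ h)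
    rw [Function.update_of_ne hkj]
  · simp [h]

lemma graphState_flip {n : ℕ} (G : SimpleGraph (Fin n)) (j : Fin n) (x : Fin n → Fin 2) :
    graphState G (Function.update x j (x j + 1))
      = ((-1 : ℂ) ^ (Finset.univ.filter fun k => G.Adj j k ∧ x k = 1).card)
          * graphState G x := by
  unfold graphState
  set x' := Function.update x j (x j + 1) with hx'
  suffices h : (-1 : ℂ) ^ (Finset.univ.filter fun e : Sym2 (Fin n) =>
        e ∈ G.edgeSet ∧ ∀ i ∈ e, x' i = 1).card
      = ((-1 : ℂ) ^ (Finset.univ.filter fun k => G.Adj j k ∧ x k = 1).card)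
        * (-1 : ℂ) ^ (Finset.univ.filter fun e : Sym2 (Fin n) =>
            e ∈ G.edgeSet ∧ ∀ i ∈ e, x i = 1).card by
    rw [h]; ring
  set m := (Finset.univ.filter fun k => G.Adj j k ∧ x k = 1).card with hm
  have hsplit : ∀ y : Fin n → Fin 2,
      (Finset.univ.filter fun e : Sym2 (Fin n) =>
          e ∈ G.edgeSet ∧ ∀ i ∈ e, y i = 1).card
        = (Finset.univ.filter fun e : Sym2 (Fin n) =>
            (e ∈ G.edgeSet ∧ ∀ i ∈ e, y i = 1) ∧ j ∈ e).card
          + (Finset.univ.filter fun e : Sym2 (Fin n) =>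
            (e ∈ G.edgeSet ∧ ∀ i ∈ e, y i = 1) ∧ j ∉ e).card := by
    intro y
    have h2 := Finset.card_filter_add_card_filter_not
      (s := Finset.univ.filter fun e : Sym2 (Fin n) => e ∈ G.edgeSet ∧ ∀ i ∈ e, y i = 1)
      (p := fun e => j ∈ e)
    rw [Finset.filter_filter, Finset.filter_filter] at h2
    exact h2.symm
  rw [hsplit x, hsplit x', cOut_eq]
  rcases fin2_cases (x j) with hx0 | hx1
  · -- x j = 0, so x' j = 1
    have hxne : x j ≠ 1 := by rw [hx0]; decide
    have hx'1 : x' j = 1 := by rw [hx', Function.update_self, hx0]; decide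
    rw [cIn_card_of_ne_one G j x hxne, Finset.card_empty,
      ← cIn_card_of_one G j x' hx'1, hx', m_update, ← hm, zero_add, pow_add]
  · -- x j = 1, so x' j = 0 ≠ 1
    have hx'ne : x' j ≠ 1 := by rw [hx', Function.update_self, hx1]; decide
    rw [cIn_card_of_ne_one G j x' hx'ne, Finset.card_empty,
      ← cIn_card_of_one G j x hx1, ← hm, zero_add]
    rw [pow_add, ← mul_assoc, ← pow_add, ← two_mul, pow_mul, neg_one_sq, one_pow, one_mul]


lemma X_eq_Z_on_graphState {n : ℕ} (G : SimpleGraph (Fin n)) (j : Fin n) :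
    (localOp fun k => if k = j then PX else 1).mulVec (graphState G)
      = (localOp fun k => if G.Adj j k then PZ else 1).mulVec (graphState G) := by
  funext x
  rw [X_mulVec, Z_mulVec, graphState_flip]
  congr 1
  have hfac : ∀ k : Fin n, ((if G.Adj j k then PZ else 1 : Mat2) (x k) (x k))
      = if G.Adj j k then (if x k = 1 then (-1 : ℂ) else 1) else 1 := by
    intro k
    by_cases h : G.Adj j k
    · rw [if_pos h, if_pos h, PZ_apply_same]
    · rw [if_neg h, if_neg h, Matrix.one_apply_eq]
  calc ((-1 : ℂ) ^ (Finset.univ.filter fun k => G.Adj j k ∧ x k = 1).card)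
      = ∏ k ∈ (Finset.univ.filter fun k => G.Adj j k ∧ x k = 1), (-1 : ℂ) := by
        rw [Finset.prod_const]
    _ = ∏ k ∈ ((Finset.univ.filter fun k => G.Adj j k).filter fun k => x k = 1),
          (-1 : ℂ) := by rw [Finset.filter_filter]
    _ = ∏ k, (if G.Adj j k then (if x k = 1 then (-1 : ℂ) else 1) else 1) := by
        rw [Finset.prod_filter, Finset.prod_filter]
    _ = ∏ k, (if G.Adj j k then PZ else 1 : Mat2) (x k) (x k) :=
        Finset.prod_congr rfl fun k _ => (hfac k).symm

lemma exp_mulVec_of_mulVec_eq_zero {n : ℕ} (M : MatQ n) (v : QState n)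
    (h : M.mulVec v = 0) : (NormedSpace.exp M).mulVec v = v := by
  letI : SeminormedRing (MatQ n) := Matrix.linftyOpSemiNormedRing
  letI : NormedRing (MatQ n) := Matrix.linftyOpNormedRing
  letI : NormedAlgebra ℂ (MatQ n) := Matrix.linftyOpNormedAlgebra
  have hpow : ∀ k : ℕ, (M ^ (k + 1)).mulVec v = 0 := by
    intro k
    rw [pow_succ, ← Matrix.mulVec_mulVec, h, Matrix.mulVec_zero]
  let L : MatQ n →ₗ[ℂ] QState n :=
    { toFun := fun A => A.mulVec v
      map_add' := fun A B => Matrix.add_mulVec A B v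
      map_smul' := fun c A => Matrix.smul_mulVec c A v }
  let φ : MatQ n →L[ℂ] QState n := LinearMap.toContinuousLinearMap L
  have hs : Summable (fun k : ℕ => ((Nat.factorial k : ℂ))⁻¹ • M ^ k) :=
    NormedSpace.expSeries_summable' M
  have h1 : φ (∑' k : ℕ, ((Nat.factorial k : ℂ))⁻¹ • M ^ k)
      = ∑' k : ℕ, φ (((Nat.factorial k : ℂ))⁻¹ • M ^ k) := (hs.hasSum.mapL φ).tsum_eq.symm
  have h2 : ∀ k : ℕ, φ (((Nat.factorial k : ℂ))⁻¹ • M ^ k) = ((Nat.factorial k : ℂ))⁻¹ • (M ^ k).mulVec v :=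
    fun k => (congrFun (LinearMap.coe_toContinuousLinearMap' L) _).trans
      (Matrix.smul_mulVec _ _ _)
  have h3 : (∑' k : ℕ, φ (((Nat.factorial k : ℂ))⁻¹ • M ^ k)) = v := by
    rw [tsum_eq_single 0]
    · rw [h2 0, pow_zero, Matrix.one_mulVec, Nat.factorial_zero, Nat.cast_one,
        inv_one, one_smul]
    · intro b hb
      obtain ⟨k, rfl⟩ := Nat.exists_eq_succ_of_ne_zero hb
      rw [h2, hpow, smul_zero]
  have : NormedSpace.exp M = ∑' k : ℕ, ((Nat.factorial k : ℂ))⁻¹ • M ^ k := by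
    rw [NormedSpace.exp_eq_tsum (𝕂 := ℂ)]
  rw [this]
  exact (h1.trans h3 : φ _ = v)



/-- `exp(iα X_j)|G⟩ = exp(iα Z_{N_j})|G⟩` for any graph state. -/
theorem stmt13 {n : ℕ} (G : SimpleGraph (Fin n)) (j : Fin n) (α : ℝ) :
    (NormedSpace.exp ((Complex.I * (α : ℂ)) •
        localOp fun k => if k = j then PX else 1)).mulVec (graphState G) =
      (NormedSpace.exp ((Complex.I * (α : ℂ)) •
        localOp fun k => if G.Adj j k then PZ else 1)).mulVec (graphState G) := by
  set Xm := localOp fun k => if k = j then PX else (1 : Mat2) with hXm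
  set Zm := localOp fun k => if G.Adj j k then PZ else (1 : Mat2) with hZm
  have hcomm : Commute Xm Zm := by
    unfold Commute SemiconjBy
    rw [hXm, hZm, localOp_mul, localOp_mul]
    have hfam : (fun k => (if k = j then PX else (1:Mat2)) * if G.Adj j k then PZ else 1)
        = fun k => (if G.Adj j k then PZ else (1:Mat2)) * if k = j then PX else 1 := by
      funext k
      by_cases hk : k = j
      · subst hk
        rw [if_pos rfl, if_neg (G.irrefl), mul_one, one_mul]
      · rw [if_neg hk]
        by_cases ha : G.Adj j k
        · rw [if_pos ha, mul_one, one_mul]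
        · rw [if_neg ha, mul_one]
    rw [hfam]
  have hD : (Xm - Zm).mulVec (graphState G) = 0 := by
    rw [Matrix.sub_mulVec, hXm, hZm, X_eq_Z_on_graphState, sub_self]
  have hsum : (Complex.I * (α : ℂ)) • Xm
      = (Complex.I * (α : ℂ)) • Zm + (Complex.I * (α : ℂ)) • (Xm - Zm) := by
    rw [← smul_add, add_sub_cancel]
  have hcomm' : Commute ((Complex.I * (α : ℂ)) • Zm)
      ((Complex.I * (α : ℂ)) • (Xm - Zm)) := by
    have h1 : Commute Zm (Xm - Zm) := (hcomm.symm).sub_right (Commute.refl Zm)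
    exact (h1.smul_left _).smul_right _
  have hexp : NormedSpace.exp ((Complex.I * (α : ℂ)) • Zm + (Complex.I * (α : ℂ)) • (Xm - Zm))
      = NormedSpace.exp ((Complex.I * (α : ℂ)) • Zm)
        * NormedSpace.exp ((Complex.I * (α : ℂ)) • (Xm - Zm)) :=
    Matrix.exp_add_of_commute _ _ hcomm'
  have hzero : (NormedSpace.exp ((Complex.I * (α : ℂ)) • (Xm - Zm))).mulVec (graphState G)
      = graphState G :=
    exp_mulVec_of_mulVec_eq_zero _ _ (by rw [Matrix.smul_mulVec, hD, smul_zero])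
  rw [hsum, hexp, ← Matrix.mulVec_mulVec, hzero]

end
end

section
/- Let G be a simple graph on Fin n with graph state |G⟩ and stabilizer S_G. Suppose there exist m ∈ ℕ, weights p₁,…,p_m ≥ 0 with ∑_k p_k = 1, operators U_k ∈ S_G, a 2^n×2^n matrix H, and c ∈ ℂ such that ∑_k p_k U_k† H U_k = c·𝟙. Then tr(H·S) = 0 for every S ∈ S_G with S ≠ 𝟙. In particular, for any vertex j and H = ⊗_{k ∈ {j}∪N_j}(𝟙 + a·(S_(j))_k) ⊗ 𝟙 with a ∈ (0,1) (here (S_(j))_k is the k-th tensor factor of the canonical generator S_(j)), one has tr(H·S_(j)) ≠ 0, so no such p_k, U_k, c exist. -/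
open Matrix
open scoped Classical

noncomputable section

-- ===== auxiliary development =====

lemma aux_localOp_mul {n : ℕ} (A B : Fin n → Mat2) :
    localOp A * localOp B = localOp fun j => A j * B j := by
  ext x y
  simp only [localOp, Matrix.mul_apply]
  calc ∑ z : Fin n → Fin 2, (∏ j, A j (x j) (z j)) * ∏ j, B j (z j) (y j)
      = ∑ z : Fin n → Fin 2, ∏ j, (A j (x j) (z j) * B j (z j) (y j)) := by
        simp [Finset.prod_mul_distrib]
    _ = ∏ j, ∑ t, A j (x j) t * B j t (y j) :=
        (Fintype.prod_sum fun j t => A j (x j) t * B j t (y j)).symm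

lemma aux_localOp_one {n : ℕ} : localOp (fun _ : Fin n => (1 : Mat2)) = 1 := by
  ext x y
  simp only [localOp, Matrix.one_apply]
  by_cases h : x = y
  · subst h; simp
  · rw [if_neg h]
    obtain ⟨j, hj⟩ := Function.ne_iff.mp h
    exact Finset.prod_eq_zero (Finset.mem_univ j) (Matrix.one_apply_ne hj)

lemma aux_trace_localOp {n : ℕ} (A : Fin n → Mat2) :
    (localOp A).trace = ∏ j, (A j).trace := by
  simp only [Matrix.trace, Matrix.diag, localOp]
  exact (Fintype.prod_sum fun j t => A j t t).symm

lemma aux_localOp_conjT {n : ℕ} (A : Fin n → Mat2) :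
    (localOp A)ᴴ = localOp fun j => (A j)ᴴ := by
  ext x y
  simp [localOp, Matrix.conjTranspose_apply, star_prod]

lemma aux_localOp_smul {n : ℕ} (c : Fin n → ℂ) (A : Fin n → Mat2) :
    localOp (fun j => c j • A j) = (∏ j, c j) • localOp A := by
  ext x y
  simp [localOp, Finset.prod_mul_distrib]

-- Pauli facts
lemma pXX : PX * PX = 1 := by rw [PX, Matrix.mul_fin_two, Matrix.one_fin_two]; norm_num
lemma pZZ : PZ * PZ = 1 := by rw [PZ, Matrix.mul_fin_two, Matrix.one_fin_two]; norm_num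
lemma pZX : PZ * PX = (-1 : ℂ) • (PX * PZ) := by
  rw [PX, PZ, Matrix.mul_fin_two, Matrix.mul_fin_two]
  ext i j; fin_cases i <;> fin_cases j <;> simp
lemma pXH : PXᴴ = PX := by
  rw [PX]; ext i j; fin_cases i <;> fin_cases j <;> simp [Matrix.conjTranspose_apply]
lemma pZH : PZᴴ = PZ := by
  rw [PZ]; ext i j; fin_cases i <;> fin_cases j <;> simp [Matrix.conjTranspose_apply]
lemma pXZH : (PX * PZ)ᴴ = (-1 : ℂ) • (PX * PZ) := by
  rw [PX, PZ, Matrix.mul_fin_two]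
  ext i j; fin_cases i <;> fin_cases j <;> simp [Matrix.conjTranspose_apply]
lemma ptrX : PX.trace = 0 := by simp [PX, Matrix.trace_fin_two]
lemma ptrZ : PZ.trace = 0 := by simp [PZ, Matrix.trace_fin_two]
lemma ptrXZ : (PX * PZ).trace = 0 := by
  rw [PX, PZ, Matrix.mul_fin_two]; simp [Matrix.trace_fin_two]

lemma z2cases (a : ZMod 2) : a = 0 ∨ a = 1 := by revert a; decide

def Xp : ZMod 2 → Mat2 := fun a => if a = 1 then PX else 1
def Zp : ZMod 2 → Mat2 := fun a => if a = 1 then PZ else 1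
def chi : ZMod 2 → ℂ := fun a => if a = 1 then -1 else 1

lemma chi_add (a b : ZMod 2) : chi (a + b) = chi a * chi b := by
  rcases z2cases a with rfl | rfl <;> rcases z2cases b with rfl | rfl <;> simp [chi]
lemma chi_zero : chi 0 = 1 := by simp [chi]
lemma chi_star (a : ZMod 2) : star (chi a) = chi a := by
  rcases z2cases a with rfl | rfl <;> simp [chi]

lemma chi_sum {ι : Type*} (s : Finset ι) (g : ι → ZMod 2) :
    ∏ k ∈ s, chi (g k) = chi (∑ k ∈ s, g k) := by
  induction s using Finset.cons_induction with
  | empty => simp [chi_zero]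
  | cons a s ha ih => rw [Finset.prod_cons, Finset.sum_cons, chi_add, ih]

lemma XZ_mul (a b c d : ZMod 2) :
    (Xp a * Zp b) * (Xp c * Zp d) = chi (b * c) • (Xp (a + c) * Zp (b + d)) := by
  rcases z2cases a with rfl | rfl <;> rcases z2cases b with rfl | rfl <;>
    rcases z2cases c with rfl | rfl <;> rcases z2cases d with rfl | rfl <;>
    simp only [Xp, Zp, chi, show ((1:ZMod 2) + 1) = 0 by decide,
      show ((0:ZMod 2) + 1) = 1 by decide, show ((1:ZMod 2) + 0) = 1 by decide,
      show ((0:ZMod 2) + 0) = 0 by decide, mul_zero, mul_one, zero_mul, one_mul,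
      if_true, if_pos rfl, show ((0:ZMod 2) = 1) = False by simp, if_false, ite_false,
      ite_true, one_smul] <;>
    (ext i j; fin_cases i <;> fin_cases j <;> simp [PX, PZ, Matrix.mul_apply, Fin.sum_univ_two, Matrix.conjTranspose_apply, Matrix.one_apply, Matrix.smul_apply, smul_eq_mul] <;> norm_num)

lemma XZ_herm (a b : ZMod 2) :
    (Xp a * Zp b)ᴴ = chi (a * b) • (Xp a * Zp b) := by
  rcases z2cases a with rfl | rfl <;> rcases z2cases b with rfl | rfl <;>
    simp only [Xp, Zp, chi, mul_zero, mul_one, zero_mul, one_mul,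
      show ((0:ZMod 2) = 1) = False by simp, if_false, ite_false, ite_true, if_pos rfl,
      one_smul] <;>
    (ext i j; fin_cases i <;> fin_cases j <;> simp [PX, PZ, Matrix.mul_apply, Fin.sum_univ_two, Matrix.conjTranspose_apply, Matrix.one_apply, Matrix.smul_apply, smul_eq_mul] <;> norm_num)

lemma XZ_trace (b : ZMod 2) : (Xp 1 * Zp b).trace = 0 := by
  rcases z2cases b with rfl | rfl <;>
    simp only [Xp, Zp, if_pos rfl, show ((0:ZMod 2) = 1) = False by simp, ite_false,
      ite_true, mul_one] <;>
    first
    | exact ptrX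
    | exact ptrXZ

section Graph
variable {n : ℕ} (G : SimpleGraph (Fin n))

def aMat (k j : Fin n) : ZMod 2 := if G.Adj k j then 1 else 0

lemma aMat_symm (k j : Fin n) : aMat G k j = aMat G j k := by
  simp only [aMat, G.adj_comm]

lemma aMat_diag (k : Fin n) : aMat G k k = 0 := by
  simp [aMat, G.irrefl]

def rowZ (v : Fin n → ZMod 2) (k : Fin n) : ZMod 2 := ∑ j, aMat G k j * v j

def ltP (n : ℕ) : Finset (Fin n × Fin n) := Finset.univ.filter fun p => p.1 < p.2

def qf (v : Fin n → ZMod 2) : ZMod 2 := ∑ p ∈ ltP n, aMat G p.1 p.2 * (v p.1 * v p.2)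

lemma rowZ_add (v w : Fin n → ZMod 2) (k : Fin n) :
    rowZ G (v + w) k = rowZ G v k + rowZ G w k := by
  simp [rowZ, mul_add, Finset.sum_add_distrib]

lemma Fdec (v w : Fin n → ZMod 2) :
    ∑ k, rowZ G v k * w k
      = ∑ p ∈ ltP n, aMat G p.1 p.2 * (v p.1 * w p.2 + v p.2 * w p.1) := by
  have h1 : ∑ k, rowZ G v k * w k
      = ∑ p : Fin n × Fin n, aMat G p.1 p.2 * v p.2 * w p.1 := by
    rw [Fintype.sum_prod_type]
    simp [rowZ, Finset.sum_mul]
  rw [h1]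
  have hsplit := Finset.sum_filter_add_sum_filter_not
    (Finset.univ : Finset (Fin n × Fin n)) (fun p => p.1 < p.2)
    (fun p => aMat G p.1 p.2 * v p.2 * w p.1)
  rw [← hsplit]
  have hge : ((Finset.univ : Finset (Fin n × Fin n)).filter fun p => ¬ p.1 < p.2)
      = (Finset.univ.filter fun p : Fin n × Fin n => p.2 < p.1)
        ∪ (Finset.univ.filter fun p : Fin n × Fin n => p.1 = p.2) := by
    ext p
    simp only [Finset.mem_filter, Finset.mem_union, Finset.mem_univ, true_and]
    constructor
    · intro h
      rcases lt_trichotomy p.1 p.2 with h' | h' | h'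
      · exact absurd h' h
      · exact Or.inr h'
      · exact Or.inl h'
    · rintro (h | h)
      · exact not_lt_of_gt h
      · rw [h]; exact lt_irrefl _
  rw [hge, Finset.sum_union]
  · have hdiag : ∑ p ∈ (Finset.univ : Finset (Fin n × Fin n)).filter
        (fun p => p.1 = p.2), aMat G p.1 p.2 * v p.2 * w p.1 = 0 := by
      apply Finset.sum_eq_zero
      intro p hp
      simp only [Finset.mem_filter] at hp
      rw [← hp.2, aMat_diag, zero_mul, zero_mul]
    rw [hdiag, add_zero]
    have hgt : ∑ p ∈ ((Finset.univ : Finset (Fin n × Fin n)).filter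
          fun p => p.2 < p.1), aMat G p.1 p.2 * v p.2 * w p.1
        = ∑ p ∈ ltP n, aMat G p.1 p.2 * v p.1 * w p.2 := by
      apply Finset.sum_nbij' (i := fun p => (p.2, p.1)) (j := fun p => (p.2, p.1))
      · intro p hp
        simp only [Finset.mem_filter, ltP, Finset.mem_univ, true_and] at hp ⊢
        exact hp
      · intro p hp
        simp only [Finset.mem_filter, ltP, Finset.mem_univ, true_and] at hp ⊢
        exact hp
      · intro p _; rfl
      · intro p _; rfl
      · intro p hp
        simp only [aMat_symm G p.2 p.1]
    rw [hgt]
    show ∑ p ∈ ltP n, _ + ∑ p ∈ ltP n, _ = _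
    rw [← Finset.sum_add_distrib]
    apply Finset.sum_congr rfl
    intro p _
    ring
  · rw [Finset.disjoint_filter]
    intro p _ h h'
    exact (ne_of_gt h) h'

lemma bil_self (v : Fin n → ZMod 2) : ∑ k, rowZ G v k * v k = 0 := by
  rw [Fdec]
  apply Finset.sum_eq_zero
  intro p _
  have : v p.1 * v p.2 + v p.2 * v p.1 = 0 := by
    rw [mul_comm (v p.2)]
    exact (by revert v; intro v; generalize v p.1 * v p.2 = x; revert x; decide)
  rw [this, mul_zero]

lemma qf_add (v w : Fin n → ZMod 2) :
    qf G (v + w) = qf G v + qf G w + ∑ k, rowZ G v k * w k := by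
  rw [Fdec]
  simp only [qf, Pi.add_apply]
  rw [← Finset.sum_add_distrib, ← Finset.sum_add_distrib]
  apply Finset.sum_congr rfl
  intro p _
  ring

end Graph

section SOpSec
variable {n : ℕ} (G : SimpleGraph (Fin n))

def SOp (v : Fin n → ZMod 2) : MatQ n :=
  chi (qf G v) • localOp fun k => Xp (v k) * Zp (rowZ G v k)

lemma SOp_zero : SOp G 0 = 1 := by
  have hq : qf G 0 = 0 := by simp [qf]
  have hr : ∀ k, rowZ G (0 : Fin n → ZMod 2) k = 0 := by simp [rowZ]
  rw [SOp, hq, chi_zero, one_smul]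
  have : (fun k => Xp ((0 : Fin n → ZMod 2) k) * Zp (rowZ G 0 k))
      = fun _ : Fin n => (1 : Mat2) := by
    funext k
    rw [hr k, Pi.zero_apply]
    simp [Xp, Zp]
  rw [this, aux_localOp_one]

lemma SOp_mul (v w : Fin n → ZMod 2) : SOp G v * SOp G w = SOp G (v + w) := by
  rw [SOp, SOp, SOp, smul_mul_assoc, mul_smul_comm, aux_localOp_mul, smul_smul]
  have hfac : (fun j => (Xp (v j) * Zp (rowZ G v j)) * (Xp (w j) * Zp (rowZ G w j)))
      = fun j => chi (rowZ G v j * w j) •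
          (Xp ((v + w) j) * Zp (rowZ G (v + w) j)) := by
    funext j
    rw [XZ_mul, rowZ_add, Pi.add_apply]
  rw [hfac, aux_localOp_smul, chi_sum, smul_smul, ← chi_add, ← chi_add, ← qf_add]

lemma SOp_conjT (v : Fin n → ZMod 2) : (SOp G v)ᴴ = SOp G v := by
  rw [SOp, Matrix.conjTranspose_smul, chi_star, aux_localOp_conjT]
  have hfac : (fun j => (Xp (v j) * Zp (rowZ G v j))ᴴ)
      = fun j => chi (rowZ G v j * v j) • (Xp (v j) * Zp (rowZ G v j)) := by
    funext j
    rw [XZ_herm, mul_comm]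
  rw [hfac, aux_localOp_smul, chi_sum, bil_self, chi_zero, one_smul]

lemma SOp_trace (v : Fin n → ZMod 2) (k0 : Fin n) (hk : v k0 = 1) :
    (SOp G v).trace = 0 := by
  rw [SOp, Matrix.trace_smul, aux_trace_localOp]
  have : ∏ j, (Xp (v j) * Zp (rowZ G v j)).trace = 0 :=
    Finset.prod_eq_zero (Finset.mem_univ k0) (by rw [hk]; exact XZ_trace _)
  rw [this, smul_zero]

lemma canonGen_eq_SOp (j : Fin n) :
    canonGen G j = SOp G (fun k => if k = j then 1 else 0) := by
  set v : Fin n → ZMod 2 := fun k => if k = j then 1 else 0 with hv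
  have hrow : ∀ k, rowZ G v k = aMat G k j := by
    intro k
    rw [rowZ]
    rw [Finset.sum_eq_single j]
    · simp [hv]
    · intro l _ hl; simp [hv, hl]
    · intro h; exact absurd (Finset.mem_univ j) h
  have hq : qf G v = 0 := by
    apply Finset.sum_eq_zero
    intro p hp
    simp only [ltP, Finset.mem_filter, Finset.mem_univ, true_and] at hp
    by_cases h1 : p.1 = j
    · have h2 : p.2 ≠ j := fun h => (ne_of_lt hp) (h1.trans h.symm)
      simp [hv, h2]
    · simp [hv, h1]
  rw [SOp, hq, chi_zero, one_smul, canonGen]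
  have hfac : canonGenFactor G j = fun k => Xp (v k) * Zp (rowZ G v k) := by
    funext k
    rw [hrow k]
    by_cases hk : k = j
    · subst hk
      rw [canonGenFactor, if_pos rfl, aMat_diag]
      simp [hv, Xp, Zp]
    · rw [canonGenFactor, if_neg hk]
      have haj : aMat G k j = if G.Adj j k then 1 else 0 := by rw [aMat_symm]; rfl
      rw [haj]
      by_cases ha : G.Adj j k
      · simp [hv, hk, ha, Xp, Zp]
      · simp [hv, hk, ha, Xp, Zp]
  rw [hfac]

lemma stab_mem_SOp : ∀ S ∈ stabGroup G, ∃ v, S = SOp G v := by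
  intro S hS
  refine Submonoid.closure_induction ?_ ?_ ?_ hS
  · rintro x ⟨j, rfl⟩
    exact ⟨_, canonGen_eq_SOp G j⟩
  · exact ⟨0, (SOp_zero G).symm⟩
  · rintro x y _ _ ⟨v, rfl⟩ ⟨w, rfl⟩
    exact ⟨v + w, SOp_mul G v w⟩

end SOpSec


/-- If `∑ₖ pₖ Uₖ† H Uₖ = c·𝟙` with `Uₖ ∈ S_G`, then `tr(H·S) = 0` for every `S ∈ S_G`, `S ≠ 𝟙`;
in particular for `H = ⊗_{k∈{j}∪N_j}(𝟙 + a·(S_(j))_k) ⊗ 𝟙` one has `tr(H·S_(j)) ≠ 0`, so no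
such `pₖ, Uₖ, c` exist. -/
theorem stmt17 {n : ℕ} (G : SimpleGraph (Fin n)) (H : MatQ n) :
    ((∃ (m : ℕ) (p : Fin m → ℝ) (U : Fin m → MatQ n) (c : ℂ),
        (∀ k, 0 ≤ p k) ∧ (∑ k, p k) = 1 ∧ (∀ k, U k ∈ stabGroup G) ∧
        (∑ k, (p k : ℂ) • ((U k)ᴴ * H * U k)) = c • (1 : MatQ n)) →
      ∀ S ∈ stabGroup G, S ≠ 1 → (H * S).trace = 0) ∧
    ∀ (j : Fin n) (a : ℝ), 0 < a → a < 1 →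
      H = localOp (fun k =>
        if k = j ∨ G.Adj j k then 1 + (a : ℂ) • canonGenFactor G j k else 1) →
      (H * canonGen G j).trace ≠ 0 ∧
      ¬ ∃ (m : ℕ) (p : Fin m → ℝ) (U : Fin m → MatQ n) (c : ℂ),
        (∀ k, 0 ≤ p k) ∧ (∑ k, p k) = 1 ∧ (∀ k, U k ∈ stabGroup G) ∧
        (∑ k, (p k : ℂ) • ((U k)ᴴ * H * U k)) = c • (1 : MatQ n) := by
  have z2self : ∀ x : ZMod 2, x + x = 0 := by decide
  have key : ((∃ (m : ℕ) (p : Fin m → ℝ) (U : Fin m → MatQ n) (c : ℂ),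
        (∀ k, 0 ≤ p k) ∧ (∑ k, p k) = 1 ∧ (∀ k, U k ∈ stabGroup G) ∧
        (∑ k, (p k : ℂ) • ((U k)ᴴ * H * U k)) = c • (1 : MatQ n)) →
      ∀ S ∈ stabGroup G, S ≠ 1 → (H * S).trace = 0) := by
    rintro ⟨m, p, U, c, hp, hps, hU, heq⟩ S hS hS1
    obtain ⟨v, rfl⟩ := stab_mem_SOp G S hS
    obtain ⟨k0, hk0⟩ : ∃ k, v k ≠ 0 := by
      by_contra h
      push_neg at h
      exact hS1 (by rw [show v = (0 : Fin n → ZMod 2) from funext h, SOp_zero])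
    have hk1 : v k0 = 1 := (z2cases (v k0)).resolve_left hk0
    have htrS : (SOp G v).trace = 0 := SOp_trace G v k0 hk1
    have hterm : ∀ k, ((U k)ᴴ * H * U k * SOp G v).trace = (H * SOp G v).trace := by
      intro k
      obtain ⟨w, hw⟩ := stab_mem_SOp G (U k) (hU k)
      rw [hw, SOp_conjT]
      have hmid : SOp G w * SOp G v * SOp G w = SOp G v := by
        rw [SOp_mul, SOp_mul]
        congr 1
        rw [add_comm w v, add_assoc, show w + w = 0 from funext fun k => z2self (w k),
          add_zero]
      calc (SOp G w * H * SOp G w * SOp G v).trace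
          = ((SOp G w * H) * (SOp G w * SOp G v)).trace := by rw [mul_assoc]
        _ = ((SOp G w * SOp G v) * (SOp G w * H)).trace := Matrix.trace_mul_comm _ _
        _ = ((SOp G w * SOp G v * SOp G w) * H).trace := by
              rw [← mul_assoc]
        _ = (SOp G v * H).trace := by rw [hmid]
        _ = (H * SOp G v).trace := Matrix.trace_mul_comm _ _
    have h3 : ∑ k, (p k : ℂ) • (((U k)ᴴ * H * U k) * SOp G v) = c • (SOp G v) := by
      calc ∑ k, (p k : ℂ) • (((U k)ᴴ * H * U k) * SOp G v)
          = (∑ k, (p k : ℂ) • ((U k)ᴴ * H * U k)) * SOp G v := by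
            rw [Finset.sum_mul]
            exact Finset.sum_congr rfl fun k _ => (smul_mul_assoc _ _ _).symm
        _ = (c • (1 : MatQ n)) * SOp G v := by rw [heq]
        _ = c • SOp G v := by rw [smul_mul_assoc, one_mul]
    have h4 := congrArg Matrix.trace h3
    rw [Matrix.trace_sum, Matrix.trace_smul, htrS, smul_zero] at h4
    simp only [Matrix.trace_smul] at h4
    have h5 : ∑ k, (p k : ℂ) • (H * SOp G v).trace = 0 := by
      rw [← h4]
      exact Finset.sum_congr rfl fun k _ => by rw [hterm k]
    rw [← Finset.sum_smul, show (∑ k, (p k : ℂ)) = 1 by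
      rw [← Complex.ofReal_sum, hps, Complex.ofReal_one], one_smul] at h5
    exact h5
  refine ⟨key, ?_⟩
  intro j a ha0 ha1 hH
  have hfactrace : ∀ k : Fin n,
      ((if k = j ∨ G.Adj j k then (1 : Mat2) + (a : ℂ) • canonGenFactor G j k else 1)
        * canonGenFactor G j k).trace
      = if k = j ∨ G.Adj j k then 2 * (a : ℂ) else 2 := by
    intro k
    by_cases hk : k = j ∨ G.Adj j k
    · rw [if_pos hk, if_pos hk]
      have hσ : canonGenFactor G j k * canonGenFactor G j k = 1 ∧
          (canonGenFactor G j k).trace = 0 := by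
        rcases hk with rfl | hadj
        · rw [canonGenFactor, if_pos rfl]; exact ⟨pXX, ptrX⟩
        · have hkj : k ≠ j := fun h => G.irrefl (h ▸ hadj)
          rw [canonGenFactor, if_neg hkj, if_pos hadj]; exact ⟨pZZ, ptrZ⟩
      rw [add_mul, one_mul, smul_mul_assoc, hσ.1, Matrix.trace_add, hσ.2,
        Matrix.trace_smul, Matrix.trace_one]
      simp
      ring
    · rw [if_neg hk, if_neg hk]
      push_neg at hk
      rw [canonGenFactor, if_neg hk.1, if_neg hk.2, one_mul, Matrix.trace_one]
      norm_num
  have htrH : (H * canonGen G j).trace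
      = ∏ k, (if k = j ∨ G.Adj j k then 2 * (a : ℂ) else 2) := by
    rw [hH, canonGen, aux_localOp_mul, aux_trace_localOp]
    exact Finset.prod_congr rfl fun k _ => hfactrace k
  have htrne : (H * canonGen G j).trace ≠ 0 := by
    rw [htrH]
    apply Finset.prod_ne_zero_iff.mpr
    intro k _
    by_cases hk : k = j ∨ G.Adj j k
    · rw [if_pos hk]
      have : (a : ℂ) ≠ 0 := Complex.ofReal_ne_zero.mpr (ne_of_gt ha0)
      exact mul_ne_zero two_ne_zero this
    · rw [if_neg hk]; exact two_ne_zero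
  refine ⟨htrne, ?_⟩
  intro hex
  have hne1 : canonGen G j ≠ 1 := by
    intro h1
    have h2 := congrArg Matrix.trace h1
    rw [canonGen, aux_trace_localOp, Matrix.trace_one,
      Finset.prod_eq_zero (Finset.mem_univ j)
        (by rw [canonGenFactor, if_pos rfl]; exact ptrX)] at h2
    exact (Nat.cast_ne_zero.mpr Fintype.card_ne_zero) h2.symm
  exact htrne (key hex (canonGen G j) (Submonoid.subset_closure ⟨j, rfl⟩) hne1)


end
end
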